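/- Let 0 < b̲ ≤ b̄ and 0 < c̲ ≤ c̄ be real constants. Define functions f̲_n, f̄_n : [0,∞) → ℝ for integers n ≥ 1 by f̲₁(t) := 1, f̄₁(t) := 1, and for n ≥ 2: f̲_n(t) := c̲·∫₀ᵗ n·e^{−b̄²·n(n−1)(t−s)}·Σ_{k=1}^{n−1} f̲_k(s)·f̲_{n−k}(s) ds and f̄_n(t) := c̄·∫₀ᵗ n·e^{−b̲²·n(n−1)(t−s)}·Σ_{k=1}^{n−1} f̄_k(s)·f̄_{n−k}(s) ds. Then for all integers n ≥ 1 and all t ≥ 0: (b̄^{−2}·c̲·(1 − e^{−2b̄²t}))^{n−1} ≤ f̲_n(t) ≤ f̄_n(t) ≤ (b̲^{−2}·c̄)^{n−1}. -/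

import Mathlib

noncomputable section

/-- The recursion f₁ = 1, f_n(t) = γ·∫₀ᵗ n e^{−β²n(n−1)(t−s)} Σ_{k=1}^{n−1} f_k f_{n−k} ds. -/
def recF (β γ : ℝ) : ℕ → ℝ → ℝ
  | 0 => fun _ => 0
  | 1 => fun _ => 1
  | n+2 => fun t =>
      γ * ∫ s in (0:ℝ)..t,
        ((n:ℝ)+2) * Real.exp (-(β^2) * (((n:ℝ)+2) * ((n:ℝ)+1)) * (t - s)) *
          ∑ k ∈ (Finset.Ico 1 (n+2)).attach,
            recF β γ k.1 s * recF β γ ((n+2) - k.1) s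
  termination_by n => n
  decreasing_by
  · have := k.2; simp only [Finset.mem_Ico] at this; omega
  · have := k.2; simp only [Finset.mem_Ico] at this; omega

/-- Abbreviation for the convolution-type sum in the recursion. -/
def recS (β γ : ℝ) (n : ℕ) (t : ℝ) : ℝ :=
  ∑ k ∈ Finset.Ico 1 n, recF β γ k t * recF β γ (n - k) t

theorem recF_succ (β γ : ℝ) (n : ℕ) (t : ℝ) :
    recF β γ (n+2) t = γ * ∫ s in (0:ℝ)..t,
      ((n:ℝ)+2) * Real.exp (-(β^2) * (((n:ℝ)+2) * ((n:ℝ)+1)) * (t - s)) * recS β γ (n+2) s := by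
  have h : ∀ s : ℝ, (∑ k ∈ (Finset.Ico 1 (n+2)).attach,
      recF β γ k.1 s * recF β γ ((n+2) - k.1) s) = recS β γ (n+2) s := by
    intro s; rw [recS]
    exact Finset.sum_attach (Finset.Ico 1 (n+2)) (fun k => recF β γ k s * recF β γ ((n+2) - k) s)
  simp only [recF.eq_3, h]

theorem recF_cont (β γ : ℝ) : ∀ n, Continuous (recF β γ n) := by
  intro n
  induction n using Nat.strong_induction_on with
  | _ n ih =>
    match n with
    | 0 => rw [recF.eq_1]; exact continuous_const
    | 1 => rw [recF.eq_2]; exact continuous_const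
    | (m+2) =>
      have hS : Continuous (recS β γ (m+2)) := by
        apply continuous_finset_sum
        intro k hk
        simp only [Finset.mem_Ico] at hk
        exact (ih k (by omega)).mul (ih (m+2-k) (by omega))
      have hint : Continuous (fun s => Real.exp ((β^2) * (((m:ℝ)+2) * ((m:ℝ)+1)) * s) * recS β γ (m+2) s) :=
        (Real.continuous_exp.comp (continuous_const.mul continuous_id)).mul hS
      have hprim : Continuous (fun t => ∫ s in (0:ℝ)..t,
          Real.exp ((β^2) * (((m:ℝ)+2) * ((m:ℝ)+1)) * s) * recS β γ (m+2) s) :=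
        intervalIntegral.continuous_primitive (fun a b => hint.intervalIntegrable a b) 0
      have key : recF β γ (m+2) = fun t => γ * (((m:ℝ)+2) * Real.exp (-(β^2) * (((m:ℝ)+2) * ((m:ℝ)+1)) * t) *
          ∫ s in (0:ℝ)..t, Real.exp ((β^2) * (((m:ℝ)+2) * ((m:ℝ)+1)) * s) * recS β γ (m+2) s) := by
        funext t
        have this1 : (∫ s in (0:ℝ)..t, ((m:ℝ)+2) * Real.exp (-(β^2) * (((m:ℝ)+2) * ((m:ℝ)+1)) * (t - s)) * recS β γ (m+2) s)
            = ((m:ℝ)+2) * Real.exp (-(β^2) * (((m:ℝ)+2) * ((m:ℝ)+1)) * t) *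
              ∫ s in (0:ℝ)..t, Real.exp ((β^2) * (((m:ℝ)+2) * ((m:ℝ)+1)) * s) * recS β γ (m+2) s := by
          rw [← intervalIntegral.integral_const_mul]
          refine intervalIntegral.integral_congr fun s _ => ?_
          have h2 : -(β^2) * (((m:ℝ)+2) * ((m:ℝ)+1)) * (t - s)
              = (-(β^2) * (((m:ℝ)+2) * ((m:ℝ)+1)) * t) + ((β^2) * (((m:ℝ)+2) * ((m:ℝ)+1)) * s) := by ring
          rw [h2, Real.exp_add]; ring
        rw [recF_succ, this1]
      rw [key]
      exact continuous_const.mul ((continuous_const.mul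
        (Real.continuous_exp.comp (continuous_const.mul continuous_id))).mul hprim)

theorem recS_cont (β γ : ℝ) (n : ℕ) : Continuous (recS β γ n) := by
  apply continuous_finset_sum
  intro k _
  exact (recF_cont β γ k).mul (recF_cont β γ (n - k))

theorem integral_exp_mul' (a t : ℝ) (ha : a ≠ 0) :
    ∫ s in (0:ℝ)..t, Real.exp (a*s) = (Real.exp (a*t) - 1)/a := by
  have hd : ∀ s ∈ Set.uIcc (0:ℝ) t, HasDerivAt (fun x => Real.exp (a*x)/a) (Real.exp (a*s)) s := by
    intro s _
    have h := (((hasDerivAt_id s).const_mul a).exp).div_const a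
    simp only [id] at h
    exact h.congr_deriv (by field_simp)
  rw [intervalIntegral.integral_eq_sub_of_hasDerivAt hd
    ((Real.continuous_exp.comp (continuous_const.mul continuous_id)).intervalIntegrable _ _)]
  simp [Real.exp_zero]
  ring

theorem integral_exp_decay (B c C D t : ℝ) (h : B * c ≠ 0) :
    ∫ s in (0:ℝ)..t, C * Real.exp (-B * c * (t - s)) * D
      = C * D * ((1 - Real.exp (-B * c * t)) / (B * c)) := by
  have h1 : ∀ s ∈ Set.uIcc (0:ℝ) t, C * Real.exp (-B * c * (t - s)) * D
      = (C * D * Real.exp (-B * c * t)) * Real.exp ((B*c) * s) := by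
    intro s _
    rw [show -B * c * (t - s) = (-B * c * t) + (B*c) * s by ring, Real.exp_add]; ring
  rw [intervalIntegral.integral_congr h1, intervalIntegral.integral_const_mul,
      integral_exp_mul' (B*c) t h]
  have he : Real.exp (-B*c*t) * Real.exp (B*c*t) = 1 := by
    rw [← Real.exp_add]; norm_num
  have he2 : Real.exp (-B*c*t) * (Real.exp (B*c*t) - 1) = 1 - Real.exp (-B*c*t) := by
    rw [mul_sub, he, mul_one]
  have h3 : C * D * Real.exp (-B*c*t) * ((Real.exp (B*c*t) - 1)/(B*c))
      = C * D * ((Real.exp (-B*c*t) * (Real.exp (B*c*t) - 1))/(B*c)) := by ring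
  rw [h3, he2]

theorem alg_up (u a b P q e : ℝ) (hab : a * b ≠ 0) (hq : q ≠ 0) :
    u * (a * (b * P) * ((1 - e)/(q * (a * b)))) = (P * (u/q)) * (1 - e) := by
  have ha : a ≠ 0 := left_ne_zero_of_mul hab
  have hb : b ≠ 0 := right_ne_zero_of_mul hab
  field_simp

set_option maxHeartbeats 2000000 in
/-- Two-sided bounds: with f̲ = recF b̄ c̲ and f̄ = recF b̲ c̄,
(b̄⁻²c̲(1−e^{−2b̄²t}))^{n−1} ≤ f̲_n(t) ≤ f̄_n(t) ≤ (b̲⁻²c̄)^{n−1}. -/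
theorem stmt13 (bl bu cl cu : ℝ) (hbl : 0 < bl) (hb : bl ≤ bu)
    (hcl : 0 < cl) (hc : cl ≤ cu) :
    ∀ (n : ℕ) (t : ℝ), 1 ≤ n → 0 ≤ t →
      (bu^(-2 : ℤ) * cl * (1 - Real.exp (-2 * bu^2 * t)))^(n-1) ≤ recF bu cl n t ∧
      recF bu cl n t ≤ recF bl cu n t ∧
      recF bl cu n t ≤ (bl^(-2 : ℤ) * cu)^(n-1) := by
  have hbu : 0 < bu := lt_of_lt_of_le hbl hb
  have hbl2 : (0:ℝ) < bl^2 := by positivity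
  have hbu2 : (0:ℝ) < bu^2 := by positivity
  have hcu : (0:ℝ) < cu := lt_of_lt_of_le hcl hc
  have hblz : bl^(-2:ℤ) = (bl^2)⁻¹ := by
    rw [zpow_neg]; norm_cast
  have hbuz : bu^(-2:ℤ) = (bu^2)⁻¹ := by
    rw [zpow_neg]; norm_cast
  have hbsq : bl^2 ≤ bu^2 := by nlinarith
  set M : ℝ := bl^(-2:ℤ) * cu with hM
  set L : ℝ → ℝ := fun s => bu^(-2:ℤ) * cl * (1 - Real.exp (-2 * bu^2 * s)) with hL
  have hMpos : 0 < M := by rw [hM, hblz]; positivity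
  have hLnn : ∀ s : ℝ, 0 ≤ s → 0 ≤ L s := by
    intro s hs
    have h1 : Real.exp (-2 * bu^2 * s) ≤ 1 := by
      rw [Real.exp_le_one_iff]
      nlinarith
    have h2 : (0:ℝ) ≤ bu^(-2:ℤ) * cl := by rw [hbuz]; positivity
    simp only [hL]
    nlinarith
  have hbuL : ∀ s : ℝ, bu^2 * L s = cl * (1 - Real.exp (-2 * bu^2 * s)) := by
    intro s
    simp only [hL, hbuz]
    field_simp
  have hLcont : Continuous L := by
    rw [hL]
    exact continuous_const.mul (continuous_const.sub
      (Real.continuous_exp.comp (continuous_const.mul continuous_id)))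
  have hLd : ∀ s : ℝ, HasDerivAt L (2*cl*Real.exp (-2*bu^2*s)) s := by
    intro s
    have h1 : HasDerivAt (fun x : ℝ => Real.exp (-2*bu^2*x)) (Real.exp (-2*bu^2*s) * (-2*bu^2)) s := by
      have h0 := ((hasDerivAt_id s).const_mul (-2*bu^2)).exp
      simp only [id] at h0
      convert h0 using 1
      ring
    have h2 := ((hasDerivAt_const s (1:ℝ)).sub h1).const_mul (bu^(-2:ℤ)*cl)
    have h3 : bu^(-2:ℤ)*cl * (0 - Real.exp (-2*bu^2*s) * (-2*bu^2)) = 2*cl*Real.exp (-2*bu^2*s) := by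
      rw [hbuz]; field_simp; ring
    rw [h3] at h2
    exact h2
  intro n
  induction n using Nat.strong_induction_on with
  | _ n ih =>
    intro t hn ht
    match n, hn with
    | 1, _ =>
      refine ⟨?_, ?_, ?_⟩ <;> simp only [recF.eq_2] <;> norm_num
    | (m+2), _ =>
      have hcpos : (0:ℝ) < ((m:ℝ)+2) * ((m:ℝ)+1) := by positivity
      have hm21 : m + 2 - 1 = m + 1 := by omega
      -- componentwise bounds from the induction hypothesis
      have hFl_low : ∀ k, 1 ≤ k → k < m+2 → ∀ s:ℝ, 0 ≤ s → L s ^ (k-1) ≤ recF bu cl k s :=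
        fun k h1 h2 s hs => (ih k h2 s h1 hs).1
      have hF_mono : ∀ k, 1 ≤ k → k < m+2 → ∀ s:ℝ, 0 ≤ s → recF bu cl k s ≤ recF bl cu k s :=
        fun k h1 h2 s hs => (ih k h2 s h1 hs).2.1
      have hFu_up : ∀ k, 1 ≤ k → k < m+2 → ∀ s:ℝ, 0 ≤ s → recF bl cu k s ≤ M^(k-1) :=
        fun k h1 h2 s hs => (ih k h2 s h1 hs).2.2
      have hFl_nn : ∀ k, 1 ≤ k → k < m+2 → ∀ s:ℝ, 0 ≤ s → 0 ≤ recF bu cl k s :=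
        fun k h1 h2 s hs => le_trans (pow_nonneg (hLnn s hs) _) (hFl_low k h1 h2 s hs)
      have hFu_nn : ∀ k, 1 ≤ k → k < m+2 → ∀ s:ℝ, 0 ≤ s → 0 ≤ recF bl cu k s :=
        fun k h1 h2 s hs => le_trans (hFl_nn k h1 h2 s hs) (hF_mono k h1 h2 s hs)
      have hcard : ((Finset.Ico 1 (m+2)).card : ℝ) = (m:ℝ)+1 := by
        rw [Nat.card_Ico]
        have : m + 2 - 1 = m + 1 := by omega
        rw [this]; push_cast; ring
      -- sum bounds
      have hS_low : ∀ s:ℝ, 0 ≤ s → ((m:ℝ)+1) * L s ^ m ≤ recS bu cl (m+2) s := by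
        intro s hs
        rw [recS]
        have h1 : ∀ k ∈ Finset.Ico 1 (m+2), L s ^ m ≤ recF bu cl k s * recF bu cl (m+2-k) s := by
          intro k hk
          simp only [Finset.mem_Ico] at hk
          have e1 : L s ^ m = L s ^ (k-1) * L s ^ ((m+2-k)-1) := by
            rw [← pow_add]; congr 1; omega
          rw [e1]
          exact mul_le_mul (hFl_low k hk.1 hk.2 s hs)
            (hFl_low (m+2-k) (by omega) (by omega) s hs)
            (pow_nonneg (hLnn s hs) _) (hFl_nn k hk.1 hk.2 s hs)
        calc ((m:ℝ)+1) * L s ^ m = ∑ _k ∈ Finset.Ico 1 (m+2), L s ^ m := by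
              rw [Finset.sum_const, nsmul_eq_mul, hcard]
          _ ≤ _ := Finset.sum_le_sum h1
      have hS_up : ∀ s:ℝ, 0 ≤ s → recS bl cu (m+2) s ≤ ((m:ℝ)+1) * M ^ m := by
        intro s hs
        rw [recS]
        have h1 : ∀ k ∈ Finset.Ico 1 (m+2), recF bl cu k s * recF bl cu (m+2-k) s ≤ M ^ m := by
          intro k hk
          simp only [Finset.mem_Ico] at hk
          have e1 : M ^ m = M ^ (k-1) * M ^ ((m+2-k)-1) := by
            rw [← pow_add]; congr 1; omega
          rw [e1]
          exact mul_le_mul (hFu_up k hk.1 hk.2 s hs)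
            (hFu_up (m+2-k) (by omega) (by omega) s hs)
            (hFu_nn (m+2-k) (by omega) (by omega) s hs) (pow_nonneg hMpos.le _)
        calc (∑ k ∈ Finset.Ico 1 (m+2), recF bl cu k s * recF bl cu ((m+2)-k) s)
            ≤ ∑ _k ∈ Finset.Ico 1 (m+2), M ^ m := Finset.sum_le_sum h1
          _ = ((m:ℝ)+1) * M ^ m := by rw [Finset.sum_const, nsmul_eq_mul, hcard]
      have hS_mono : ∀ s:ℝ, 0 ≤ s → recS bu cl (m+2) s ≤ recS bl cu (m+2) s := by
        intro s hs
        rw [recS, recS]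
        apply Finset.sum_le_sum
        intro k hk
        simp only [Finset.mem_Ico] at hk
        exact mul_le_mul (hF_mono k hk.1 hk.2 s hs)
          (hF_mono (m+2-k) (by omega) (by omega) s hs)
          (hFl_nn (m+2-k) (by omega) (by omega) s hs) (hFu_nn k hk.1 hk.2 s hs)
      have hS_nn : ∀ s:ℝ, 0 ≤ s → 0 ≤ recS bu cl (m+2) s := fun s hs =>
        le_trans (mul_nonneg (by positivity) (pow_nonneg (hLnn s hs) m)) (hS_low s hs)
      -- continuity / integrability
      have hcSl := recS_cont bu cl (m+2)
      have hcSu := recS_cont bl cu (m+2)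
      have hexp_cont : ∀ B : ℝ, Continuous fun s : ℝ =>
          Real.exp (-(B) * (((m:ℝ)+2) * ((m:ℝ)+1)) * (t - s)) := fun B =>
        Real.continuous_exp.comp (continuous_const.mul (continuous_const.sub continuous_id))
      have hintl : Continuous fun s => ((m:ℝ)+2) *
          Real.exp (-(bu^2) * (((m:ℝ)+2) * ((m:ℝ)+1)) * (t - s)) * recS bu cl (m+2) s :=
        ((continuous_const.mul (hexp_cont (bu^2))).mul hcSl)
      have hintu : Continuous fun s => ((m:ℝ)+2) *
          Real.exp (-(bl^2) * (((m:ℝ)+2) * ((m:ℝ)+1)) * (t - s)) * recS bl cu (m+2) s :=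
        ((continuous_const.mul (hexp_cont (bl^2))).mul hcSu)
      have hintLm : Continuous fun s => ((m:ℝ)+2) *
          Real.exp (-(bu^2) * (((m:ℝ)+2) * ((m:ℝ)+1)) * (t - s)) * (((m:ℝ)+1) * L s ^ m) :=
        ((continuous_const.mul (hexp_cont (bu^2))).mul (continuous_const.mul (hLcont.pow m)))
      have hintMm : Continuous fun s => ((m:ℝ)+2) *
          Real.exp (-(bl^2) * (((m:ℝ)+2) * ((m:ℝ)+1)) * (t - s)) * (((m:ℝ)+1) * M ^ m) :=
        ((continuous_const.mul (hexp_cont (bl^2))).mul continuous_const)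
      refine ⟨?_, ?_, ?_⟩
      · -- lower bound
        rw [recF_succ, hm21]
        set A : ℝ := bu^2 * (((m:ℝ)+2) * ((m:ℝ)+1)) with hA
        have hApos : 0 < A := by rw [hA]; positivity
        set g : ℝ → ℝ := fun s => Real.exp (A * s) * L s ^ (m+1) with hg
        set g' : ℝ → ℝ := fun s => A * Real.exp (A * s) * L s ^ (m+1)
            + Real.exp (A * s) * (((m:ℝ)+1) * L s ^ m * (2*cl*Real.exp (-2*bu^2*s))) with hg'
        have hgd : ∀ s ∈ Set.uIcc (0:ℝ) t, HasDerivAt g (g' s) s := by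
          intro s _
          have hE : HasDerivAt (fun x : ℝ => Real.exp (A * x)) (Real.exp (A * s) * A) s := by
            have h0 := ((hasDerivAt_id s).const_mul A).exp
            simp only [id] at h0
            convert h0 using 1
            ring
          have hP := (hLd s).pow (m+1)
          have h1 := hE.mul hP
          simp only [hg']
          exact h1.congr_deriv (by
            simp only [Nat.add_sub_cancel, Pi.pow_apply]
            push_cast
            ring)
        have hEc : Continuous fun s : ℝ => Real.exp (A * s) :=
          Real.continuous_exp.comp (continuous_const.mul continuous_id)
        have hE2c : Continuous fun s : ℝ => Real.exp (-2*bu^2*s) :=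
          Real.continuous_exp.comp (continuous_const.mul continuous_id)
        have hg'cont : Continuous g' := by
          simp only [hg']
          exact ((continuous_const.mul hEc).mul (hLcont.pow (m+1))).add
            (hEc.mul (((continuous_const.mul (hLcont.pow m))).mul (continuous_const.mul hE2c)))
        have hrhs_cont : Continuous fun s : ℝ => Real.exp (A * s) * (cl * (((m:ℝ)+2) * ((m:ℝ)+1)) * L s ^ m) :=
          hEc.mul (continuous_const.mul (hLcont.pow m))
        have hftc : (∫ s in (0:ℝ)..t, g' s) = g t - g 0 :=
          intervalIntegral.integral_eq_sub_of_hasDerivAt hgd (hg'cont.intervalIntegrable _ _)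
        have hg0 : g 0 = 0 := by
          simp only [hg, hL]
          norm_num
        have hg'le : ∀ s ∈ Set.Icc (0:ℝ) t, g' s ≤
            Real.exp (A * s) * (cl * (((m:ℝ)+2) * ((m:ℝ)+1)) * L s ^ m) := by
          intro s hs
          simp only [hg']
          have hLs := hLnn s hs.1
          have hLm : (0:ℝ) ≤ L s ^ m := pow_nonneg hLs m
          have hE2 : (0:ℝ) ≤ Real.exp (-2*bu^2*s) := Real.exp_nonneg _
          have hh := hbuL s
          have hbr : A * L s ^ (m+1) + (((m:ℝ)+1) * L s ^ m * (2*cl*Real.exp (-2*bu^2*s)))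
              ≤ cl * (((m:ℝ)+2) * ((m:ℝ)+1)) * L s ^ m := by
            have e1 : A * L s ^ (m+1) = (((m:ℝ)+2) * ((m:ℝ)+1)) * L s ^ m * (bu^2 * L s) := by
              rw [hA, pow_succ]; ring
            rw [e1, hh]
            have hm0 : (0:ℝ) ≤ (m:ℝ) := Nat.cast_nonneg m
            have hP : (0:ℝ) ≤ cl * L s ^ m * Real.exp (-2*bu^2*s) :=
              mul_nonneg (mul_nonneg hcl.le hLm) hE2
            nlinarith [mul_nonneg (mul_nonneg hP hm0) hm0, mul_nonneg hP hm0]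
          have e2 : A * Real.exp (A * s) * L s ^ (m+1)
              + Real.exp (A * s) * (((m:ℝ)+1) * L s ^ m * (2*cl*Real.exp (-2*bu^2*s)))
              = Real.exp (A * s) * (A * L s ^ (m+1) + (((m:ℝ)+1) * L s ^ m * (2*cl*Real.exp (-2*bu^2*s)))) := by
            ring
          rw [e2]
          exact mul_le_mul_of_nonneg_left hbr (Real.exp_nonneg _)
        have hcmp : (∫ s in (0:ℝ)..t, g' s) ≤
            ∫ s in (0:ℝ)..t, Real.exp (A * s) * (cl * (((m:ℝ)+2) * ((m:ℝ)+1)) * L s ^ m) :=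
          intervalIntegral.integral_mono_on ht (hg'cont.intervalIntegrable _ _)
            (hrhs_cont.intervalIntegrable _ _) hg'le
        have hid : cl * (∫ s in (0:ℝ)..t, ((m:ℝ)+2) *
              Real.exp (-(bu^2) * (((m:ℝ)+2) * ((m:ℝ)+1)) * (t - s)) * (((m:ℝ)+1) * L s ^ m))
            = Real.exp (-(A * t)) * ∫ s in (0:ℝ)..t,
              Real.exp (A * s) * (cl * (((m:ℝ)+2) * ((m:ℝ)+1)) * L s ^ m) := by
          rw [← intervalIntegral.integral_const_mul, ← intervalIntegral.integral_const_mul]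
          refine intervalIntegral.integral_congr fun s _ => ?_
          rw [show -(bu^2) * (((m:ℝ)+2) * ((m:ℝ)+1)) * (t - s) = -(A * t) + A * s by rw [hA]; ring,
            Real.exp_add]
          ring
        have hmain : L t ^ (m+1) ≤ cl * ∫ s in (0:ℝ)..t, ((m:ℝ)+2) *
            Real.exp (-(bu^2) * (((m:ℝ)+2) * ((m:ℝ)+1)) * (t - s)) * (((m:ℝ)+1) * L s ^ m) := by
          rw [hid]
          have h5 : Real.exp (A * t) * L t ^ (m+1) ≤ ∫ s in (0:ℝ)..t,
              Real.exp (A * s) * (cl * (((m:ℝ)+2) * ((m:ℝ)+1)) * L s ^ m) := by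
            have e3 : Real.exp (A * t) * L t ^ (m+1) = g t - g 0 := by
              rw [hg0]; simp only [hg]; ring
            rw [e3, ← hftc]
            exact hcmp
          calc L t ^ (m+1)
              = Real.exp (-(A * t)) * (Real.exp (A * t) * L t ^ (m+1)) := by
                rw [← mul_assoc, ← Real.exp_add]; norm_num
            _ ≤ _ := mul_le_mul_of_nonneg_left h5 (Real.exp_nonneg _)
        have hstep : (∫ s in (0:ℝ)..t, ((m:ℝ)+2) *
              Real.exp (-(bu^2) * (((m:ℝ)+2) * ((m:ℝ)+1)) * (t - s)) * (((m:ℝ)+1) * L s ^ m))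
            ≤ ∫ s in (0:ℝ)..t, ((m:ℝ)+2) *
              Real.exp (-(bu^2) * (((m:ℝ)+2) * ((m:ℝ)+1)) * (t - s)) * recS bu cl (m+2) s := by
          apply intervalIntegral.integral_mono_on ht (hintLm.intervalIntegrable _ _)
            (hintl.intervalIntegrable _ _)
          intro s hs
          exact mul_le_mul_of_nonneg_left (hS_low s hs.1) (by positivity)
        exact le_trans hmain (mul_le_mul_of_nonneg_left hstep hcl.le)
      · -- middle bound
        rw [recF_succ, recF_succ]
        have hI1 : (0:ℝ) ≤ ∫ s in (0:ℝ)..t, ((m:ℝ)+2) *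
            Real.exp (-(bu^2) * (((m:ℝ)+2) * ((m:ℝ)+1)) * (t - s)) * recS bu cl (m+2) s := by
          apply intervalIntegral.integral_nonneg ht
          intro s hs
          have h0 := hS_nn s hs.1
          positivity
        have hI12 : (∫ s in (0:ℝ)..t, ((m:ℝ)+2) *
              Real.exp (-(bu^2) * (((m:ℝ)+2) * ((m:ℝ)+1)) * (t - s)) * recS bu cl (m+2) s)
            ≤ ∫ s in (0:ℝ)..t, ((m:ℝ)+2) *
              Real.exp (-(bl^2) * (((m:ℝ)+2) * ((m:ℝ)+1)) * (t - s)) * recS bl cu (m+2) s := by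
          apply intervalIntegral.integral_mono_on ht (hintl.intervalIntegrable _ _)
            (hintu.intervalIntegrable _ _)
          intro s hs
          have hts : 0 ≤ t - s := by linarith [hs.2]
          have hexple : Real.exp (-(bu^2) * (((m:ℝ)+2) * ((m:ℝ)+1)) * (t - s))
              ≤ Real.exp (-(bl^2) * (((m:ℝ)+2) * ((m:ℝ)+1)) * (t - s)) := by
            apply Real.exp_le_exp.2
            nlinarith [mul_nonneg (mul_nonneg (sub_nonneg.2 hbsq) hcpos.le) hts]
          exact mul_le_mul (mul_le_mul_of_nonneg_left hexple (by positivity : (0:ℝ) ≤ (m:ℝ)+2))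
            (hS_mono s hs.1) (hS_nn s hs.1) (by positivity)
        calc cl * (∫ s in (0:ℝ)..t, ((m:ℝ)+2) *
              Real.exp (-(bu^2) * (((m:ℝ)+2) * ((m:ℝ)+1)) * (t - s)) * recS bu cl (m+2) s)
            ≤ cu * (∫ s in (0:ℝ)..t, ((m:ℝ)+2) *
              Real.exp (-(bu^2) * (((m:ℝ)+2) * ((m:ℝ)+1)) * (t - s)) * recS bu cl (m+2) s) :=
              mul_le_mul_of_nonneg_right hc hI1
          _ ≤ _ := mul_le_mul_of_nonneg_left hI12 hcu.le
      · -- upper bound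
        rw [recF_succ, hm21]
        have step1 : (∫ s in (0:ℝ)..t, ((m:ℝ)+2) *
              Real.exp (-(bl^2) * (((m:ℝ)+2) * ((m:ℝ)+1)) * (t - s)) * recS bl cu (m+2) s)
            ≤ ∫ s in (0:ℝ)..t, ((m:ℝ)+2) *
              Real.exp (-(bl^2) * (((m:ℝ)+2) * ((m:ℝ)+1)) * (t - s)) * (((m:ℝ)+1) * M ^ m) := by
          apply intervalIntegral.integral_mono_on ht (hintu.intervalIntegrable _ _)
            (hintMm.intervalIntegrable _ _)
          intro s hs
          exact mul_le_mul_of_nonneg_left (hS_up s hs.1) (by positivity)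
        have step2 : (∫ s in (0:ℝ)..t, ((m:ℝ)+2) *
              Real.exp (-(bl^2) * (((m:ℝ)+2) * ((m:ℝ)+1)) * (t - s)) * (((m:ℝ)+1) * M ^ m))
            = ((m:ℝ)+2) * (((m:ℝ)+1) * M ^ m) *
              ((1 - Real.exp (-(bl^2) * (((m:ℝ)+2) * ((m:ℝ)+1)) * t)) / (bl^2 * (((m:ℝ)+2) * ((m:ℝ)+1)))) :=
          integral_exp_decay (bl^2) _ _ _ t (by positivity)
        have step3 : cu * (((m:ℝ)+2) * (((m:ℝ)+1) * M ^ m) *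
              ((1 - Real.exp (-(bl^2) * (((m:ℝ)+2) * ((m:ℝ)+1)) * t)) / (bl^2 * (((m:ℝ)+2) * ((m:ℝ)+1)))))
            ≤ M ^ (m+1) := by
          have hexpnn : (0:ℝ) ≤ Real.exp (-(bl^2) * (((m:ℝ)+2) * ((m:ℝ)+1)) * t) := Real.exp_nonneg _
          have hexple1 : Real.exp (-(bl^2) * (((m:ℝ)+2) * ((m:ℝ)+1)) * t) ≤ 1 := by
            rw [Real.exp_le_one_iff]
            nlinarith [mul_nonneg (mul_nonneg hbl2.le hcpos.le) ht]
          have hMm : (0:ℝ) ≤ M ^ m := pow_nonneg hMpos.le m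
          have key : cu * (((m:ℝ)+2) * (((m:ℝ)+1) * M ^ m) *
                ((1 - Real.exp (-(bl^2) * (((m:ℝ)+2) * ((m:ℝ)+1)) * t)) / (bl^2 * (((m:ℝ)+2) * ((m:ℝ)+1)))))
              = (M^m * (cu / bl^2)) * (1 - Real.exp (-(bl^2) * (((m:ℝ)+2) * ((m:ℝ)+1)) * t)) := by
            have hab : ((m:ℝ)+2) * ((m:ℝ)+1) ≠ 0 := hcpos.ne'
            exact alg_up cu _ _ _ _ _ hab hbl2.ne'
          rw [key]
          have hpow : M ^ (m+1) = M^m * (cu/bl^2) := by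
            rw [pow_succ]
            congr 1
            rw [hM, hblz, div_eq_mul_inv]
            exact mul_comm _ _
          rw [hpow]
          have h9 : (0:ℝ) ≤ M^m * (cu/bl^2) := by positivity
          exact mul_le_of_le_one_right h9 (by linarith)
        calc cu * (∫ s in (0:ℝ)..t, ((m:ℝ)+2) *
              Real.exp (-(bl^2) * (((m:ℝ)+2) * ((m:ℝ)+1)) * (t - s)) * recS bl cu (m+2) s)
            ≤ cu * (∫ s in (0:ℝ)..t, ((m:ℝ)+2) *
              Real.exp (-(bl^2) * (((m:ℝ)+2) * ((m:ℝ)+1)) * (t - s)) * (((m:ℝ)+1) * M ^ m)) :=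
              mul_le_mul_of_nonneg_left step1 hcu.le
          _ = _ := by rw [step2]
          _ ≤ M ^ (m+1) := step3

end
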